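/- Let n = 2k with k ≥ 1. Let c be an invertible symmetric n×n real matrix, a an arbitrary n×n real matrix, x a symmetric n×n real matrix, and g ∈ GL(n,ℝ) with det g > 0. Put (c', a') = Ad*(x,g)(c,a) = ((gᵀ)⁻¹ c g⁻¹, g a g⁻¹ + x (gᵀ)⁻¹ c g⁻¹). Then det(c')³ · det( ½ ( a' c'⁻¹ − (a' c'⁻¹)ᵀ ) ) = det(g)^{−4} · det(c)³ · det( ½ ( a c⁻¹ − (a c⁻¹)ᵀ ) ), i.e. h_k(c,a) = det(c)² π(a c⁻¹)² det(c) is a semiinvariant of weight det(g)^{−4} for the coadjoint action. -/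

import Mathlib

/-!
Since `c'⁻¹ = g c⁻¹ gᵀ`, we get `a' c'⁻¹ = g (a c⁻¹) gᵀ + x`. The symmetric summand `x` drops out
of the skew part, so the skew part transforms by congruence `S ↦ g S gᵀ` and its determinant gains
`det(g)²`, while `det c' = det(c) / det(g)²`. The total weight is `det(g)^(2 - 6) = det(g)⁻⁴`.
-/

open Matrix

namespace Matrix

variable {n R : Type*} [Fintype n] [DecidableEq n] [CommRing R]

theorem inv_transpose_inv_mul_mul_inv {g : Matrix n n R} (hg : IsUnit g.det) (c : Matrix n n R) :
    ((gᵀ)⁻¹ * c * g⁻¹)⁻¹ = g * c⁻¹ * gᵀ := by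
  have hgt : IsUnit gᵀ.det := by rwa [det_transpose]
  rw [mul_inv_rev, mul_inv_rev, nonsing_inv_nonsing_inv _ hg, nonsing_inv_nonsing_inv _ hgt,
    Matrix.mul_assoc]

theorem isUnit_det_transpose_inv_mul_mul_inv {g c : Matrix n n R} (hg : IsUnit g.det)
    (hc : IsUnit c.det) : IsUnit ((gᵀ)⁻¹ * c * g⁻¹).det := by
  simp only [det_mul, det_nonsing_inv, det_transpose]
  exact ((hg.ringInverse).mul hc).mul hg.ringInverse

/-- The product `a' c'⁻¹` for `(c', a') = Ad*(x, g) (c, a)`. -/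
theorem coadjoint_mul_inv {g c : Matrix n n R} (hg : IsUnit g.det) (hc : IsUnit c.det)
    (a x : Matrix n n R) :
    (g * a * g⁻¹ + x * ((gᵀ)⁻¹ * c * g⁻¹)) * ((gᵀ)⁻¹ * c * g⁻¹)⁻¹ = g * (a * c⁻¹) * gᵀ + x := by
  rw [add_mul, mul_nonsing_inv_cancel_right _ _ (isUnit_det_transpose_inv_mul_mul_inv hg hc),
    inv_transpose_inv_mul_mul_inv hg]
  calc g * a * g⁻¹ * (g * c⁻¹ * gᵀ) + x = g * a * (g⁻¹ * g) * (c⁻¹ * gᵀ) + x := by noncomm_ring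
    _ = g * (a * c⁻¹) * gᵀ + x := by rw [nonsing_inv_mul _ hg, Matrix.mul_one]; noncomm_ring

theorem congr_add_symm_sub_transpose (g M : Matrix n n R) {x : Matrix n n R} (hx : x.IsSymm) :
    (g * M * gᵀ + x) - (g * M * gᵀ + x)ᵀ = g * (M - Mᵀ) * gᵀ := by
  rw [transpose_add, transpose_mul, transpose_mul, transpose_transpose, hx.eq]
  noncomm_ring

theorem det_smul_congr (r : R) (g M : Matrix n n R) :
    (r • (g * M * gᵀ)).det = g.det ^ 2 * (r • M).det := by
  rw [show r • (g * M * gᵀ) = g * (r • M) * gᵀ by rw [Matrix.mul_smul, Matrix.smul_mul],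
    det_mul, det_mul, det_transpose]
  ring

end Matrix

theorem h_k_semiinvariant_general (k : ℕ)
    (c a x g : Matrix (Fin (2 * k)) (Fin (2 * k)) ℝ)
    (hcu : IsUnit c.det) (hx : x.IsSymm) (hg : 0 < g.det) :
    ((gᵀ)⁻¹ * c * g⁻¹).det ^ 3 *
      ((1 / 2 : ℝ) •
        ((g * a * g⁻¹ + x * ((gᵀ)⁻¹ * c * g⁻¹)) * ((gᵀ)⁻¹ * c * g⁻¹)⁻¹ -
          ((g * a * g⁻¹ + x * ((gᵀ)⁻¹ * c * g⁻¹)) * ((gᵀ)⁻¹ * c * g⁻¹)⁻¹)ᵀ)).det =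
    (g.det ^ 4)⁻¹ * (c.det ^ 3 * ((1 / 2 : ℝ) • (a * c⁻¹ - (a * c⁻¹)ᵀ)).det) := by
  have hgu : IsUnit g.det := hg.ne'.isUnit
  rw [coadjoint_mul_inv hgu hcu, congr_add_symm_sub_transpose _ _ hx, det_smul_congr, det_mul,
    det_mul, det_nonsing_inv, det_nonsing_inv, det_transpose, Ring.inverse_eq_inv]
  field_simp

theorem h_k_semiinvariant (k : ℕ) (hk : 1 ≤ k)
    (c a x g : Matrix (Fin (2 * k)) (Fin (2 * k)) ℝ)
    (hc : c.IsSymm) (hcu : IsUnit c.det) (hx : x.IsSymm) (hg : 0 < g.det) :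
    ((gᵀ)⁻¹ * c * g⁻¹).det ^ 3 *
      ((1 / 2 : ℝ) •
        ((g * a * g⁻¹ + x * ((gᵀ)⁻¹ * c * g⁻¹)) * ((gᵀ)⁻¹ * c * g⁻¹)⁻¹ -
          ((g * a * g⁻¹ + x * ((gᵀ)⁻¹ * c * g⁻¹)) * ((gᵀ)⁻¹ * c * g⁻¹)⁻¹)ᵀ)).det =
    (g.det ^ 4)⁻¹ * (c.det ^ 3 * ((1 / 2 : ℝ) • (a * c⁻¹ - (a * c⁻¹)ᵀ)).det) :=
  h_k_semiinvariant_general k c a x g hcu hx hg
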